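/- Let p be a prime. For non-zero points u, v, w ∈ ℚₚ³, define the projective distance dist(u,w) = ‖u ∧ w‖ₚ / (‖u‖ₚ · ‖w‖ₚ). Then dist satisfies the ultrametric inequality: dist(u,w) ≤ max(dist(u,v), dist(v,w)). -/

import Mathlib

/-!
The inequality comes from the identity
`(u ⨯₃ w)ᵢ vₖ = (u ⨯₃ v)ᵢ wₖ + (v ⨯₃ w)ᵢ uₖ - δᵢₖ det (u, v, w)`.
Over a nonarchimedean field every term on the right is bounded by
`max (‖u ⨯₃ v‖ ‖w‖) (‖v ⨯₃ w‖ ‖u‖)`, the determinant because it is `u ⬝ᵥ (v ⨯₃ w)`;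
hence so is `‖u ⨯₃ w‖ ‖v‖`, and dividing by `‖u‖ ‖v‖ ‖w‖` gives the ultrametric inequality.
-/

/-- The p-adic sup norm of a vector in `ℚₚ³`. -/
noncomputable def pSup {p : ℕ} [Fact p.Prime] (v : Fin 3 → ℚ_[p]) : ℝ := max (max ‖v 0‖ ‖v 1‖) ‖v 2‖

/-- The cross product on `ℚₚ³`. -/
noncomputable def pCross {p : ℕ} [Fact p.Prime] (v w : Fin 3 → ℚ_[p]) : Fin 3 → ℚ_[p] :=
  ![v 1 * w 2 - v 2 * w 1, v 2 * w 0 - v 0 * w 2, v 0 * w 1 - v 1 * w 0]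

/-- The projective distance on non-zero points of `ℚₚ³`. -/
noncomputable def pDist {p : ℕ} [Fact p.Prime] (u w : Fin 3 → ℚ_[p]) : ℝ :=
  pSup (pCross u w) / (pSup u * pSup w)

open Matrix

theorem cross_apply_mul_apply {R : Type*} [CommRing R] (u v w : Fin 3 → R) (i k : Fin 3) :
    (u ⨯₃ w) i * v k =
      (u ⨯₃ v) i * w k + (v ⨯₃ w) i * u k - if i = k then u ⬝ᵥ (v ⨯₃ w) else 0 := by
  fin_cases i <;> fin_cases k <;>
    simp [cross_apply, dotProduct, Fin.sum_univ_three] <;> ring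

theorem mul_pi_norm_le {ι E : Type*} [Fintype ι] [SeminormedAddCommGroup E] {x : ι → E}
    {a M : ℝ} (ha : 0 ≤ a) (hM : 0 ≤ M) (h : ∀ i, a * ‖x i‖ ≤ M) : a * ‖x‖ ≤ M := by
  rcases ha.eq_or_lt with rfl | ha
  · simpa using hM
  rw [← le_div_iff₀' ha, pi_norm_le_iff_of_nonneg (div_nonneg hM ha.le)]
  exact fun i => (le_div_iff₀' ha).2 (h i)

theorem pi_norm_mul_pi_norm_le {ι κ E F : Type*} [Fintype ι] [Fintype κ]
    [SeminormedAddCommGroup E] [SeminormedAddCommGroup F] {x : ι → E} {y : κ → F} {M : ℝ}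
    (hM : 0 ≤ M) (h : ∀ i k, ‖x i‖ * ‖y k‖ ≤ M) : ‖x‖ * ‖y‖ ≤ M :=
  mul_pi_norm_le (norm_nonneg x) hM fun k => mul_comm ‖y k‖ ‖x‖ ▸
    mul_pi_norm_le (norm_nonneg _) hM fun i => mul_comm ‖x i‖ ‖y k‖ ▸ h i k

section SeminormedRing

variable {R : Type*} [SeminormedRing R]

theorem norm_apply_mul_apply_le {ι κ : Type*} [Fintype ι] [Fintype κ]
    (x : ι → R) (y : κ → R) (i : ι) (k : κ) : ‖x i * y k‖ ≤ ‖x‖ * ‖y‖ :=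
  (norm_mul_le _ _).trans <|
    mul_le_mul (norm_le_pi_norm x i) (norm_le_pi_norm y k) (norm_nonneg _) (norm_nonneg _)

theorem norm_dotProduct_le [IsUltrametricDist R] {ι : Type*} [Fintype ι] (x y : ι → R) :
    ‖x ⬝ᵥ y‖ ≤ ‖x‖ * ‖y‖ :=
  IsUltrametricDist.norm_sum_le_of_forall_le_of_nonneg (by positivity)
    fun i _ => norm_apply_mul_apply_le x y i i

end SeminormedRing

section Ultrametric

variable {K : Type*} [NormedField K] [IsUltrametricDist K]

theorem norm_cross_mul_norm_le_max (u v w : Fin 3 → K) :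
    ‖u ⨯₃ w‖ * ‖v‖ ≤ max (‖u ⨯₃ v‖ * ‖w‖) (‖v ⨯₃ w‖ * ‖u‖) := by
  refine pi_norm_mul_pi_norm_le (by positivity) fun i k => ?_
  rw [← norm_mul, cross_apply_mul_apply, sub_eq_add_neg]
  refine (IsUltrametricDist.norm_add_le_max _ _).trans (max_le ?_ ?_)
  · exact (IsUltrametricDist.norm_add_le_max _ _).trans <| max_le_max
      (norm_apply_mul_apply_le _ _ i k) (norm_apply_mul_apply_le _ _ i k)
  · rw [norm_neg]
    split_ifs
    · exact le_max_of_le_right (mul_comm ‖u‖ _ ▸ norm_dotProduct_le u _)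
    · simpa using le_max_of_le_left (by positivity)

theorem norm_cross_div_le_max {u v w : Fin 3 → K} (hu : u ≠ 0) (hv : v ≠ 0) (hw : w ≠ 0) :
    ‖u ⨯₃ w‖ / (‖u‖ * ‖w‖) ≤
      max (‖u ⨯₃ v‖ / (‖u‖ * ‖v‖)) (‖v ⨯₃ w‖ / (‖v‖ * ‖w‖)) := by
  have hu := norm_pos_iff.2 hu
  have hv := norm_pos_iff.2 hv
  have hw := norm_pos_iff.2 hw
  have huvw : 0 < ‖u‖ * ‖v‖ * ‖w‖ := by positivity
  calc ‖u ⨯₃ w‖ / (‖u‖ * ‖w‖)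
      = ‖u ⨯₃ w‖ * ‖v‖ / (‖u‖ * ‖v‖ * ‖w‖) := by field_simp
    _ ≤ max (‖u ⨯₃ v‖ * ‖w‖) (‖v ⨯₃ w‖ * ‖u‖) / (‖u‖ * ‖v‖ * ‖w‖) :=
      div_le_div_of_nonneg_right (norm_cross_mul_norm_le_max u v w) huvw.le
    _ = max (‖u ⨯₃ v‖ / (‖u‖ * ‖v‖)) (‖v ⨯₃ w‖ / (‖v‖ * ‖w‖)) := by
      rw [← max_div_div_right huvw.le]
      congr 1 <;> field_simp

end Ultrametric

theorem pSup_eq_norm {p : ℕ} [Fact p.Prime] (v : Fin 3 → ℚ_[p]) : pSup v = ‖v‖ := by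
  refine le_antisymm ?_ ?_
  · exact max_le (max_le (norm_le_pi_norm v 0) (norm_le_pi_norm v 1)) (norm_le_pi_norm v 2)
  · refine (pi_norm_le_iff_of_nonneg (by unfold pSup; positivity)).2 fun i => ?_
    fin_cases i <;> simp [pSup]

theorem pDist_eq {p : ℕ} [Fact p.Prime] (u w : Fin 3 → ℚ_[p]) :
    pDist u w = ‖u ⨯₃ w‖ / (‖u‖ * ‖w‖) := by
  simp only [pDist, pSup_eq_norm]
  rfl

theorem stmt_5 (p : ℕ) [Fact p.Prime] (u v w : Fin 3 → ℚ_[p])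
    (hu : u ≠ 0) (hv : v ≠ 0) (hw : w ≠ 0) :
    pDist u w ≤ max (pDist u v) (pDist v w) := by
  simpa only [pDist_eq] using norm_cross_div_le_max hu hv hw
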